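/- Circuit elimination for symplectic matroids: let C₁, C₂ be distinct circuits of a symplectic matroid M with C₁ ∪ C₂ admissible and x ∈ C₁ ∩ C₂. Then there exists a circuit C of M with C ⊆ (C₁ ∪ C₂) − {x}. -/

import Mathlib

open Finset

/-- The ground set `E_{±n} = [n] ∪ [n]*`, where `(i, false)` denotes `i`
and `(i, true)` denotes `i*`. -/
abbrev EE (n : ℕ) := Fin n × Bool

/-- The involution `* : E_{±n} → E_{±n}`. -/
def estar {n : ℕ} (x : EE n) : EE n := (x.1, !x.2)

/-- `S* = {x* : x ∈ S}`. -/
def starSet {n : ℕ} (S : Finset (EE n)) : Finset (EE n) := S.image estar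

/-- A set is admissible if `S ∩ S* = ∅`. -/
def Admissible {n : ℕ} (S : Finset (EE n)) : Prop := Disjoint S (starSet S)

/-- An admissible ordering of `E_{±n}`, encoded by an injective rank function `w`
such that `x < y` implies `y* < x*`. -/
structure AdmOrdering (n : ℕ) where
  w : EE n → ℕ
  inj : Function.Injective w
  rev : ∀ x y, w x < w y → w (estar y) < w (estar x)

/-- The induced (componentwise) partial order on subsets:
compare the sorted lists of ranks entrywise. -/
def setLE {n : ℕ} (o : AdmOrdering n) (A B : Finset (EE n)) : Prop :=
  List.Forall₂ (· ≤ ·) (Finset.sort (A.image o.w) (· ≤ ·)) (Finset.sort (B.image o.w) (· ≤ ·))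

/-- The Maximality Property: for every admissible ordering, the family has a
unique maximal member in the induced partial order. -/
def HasUniqueMaximal {n : ℕ} (𝓑 : Set (Finset (EE n))) : Prop :=
  ∀ o : AdmOrdering n, ∃! M, M ∈ 𝓑 ∧ ∀ S ∈ 𝓑, setLE o M S → M = S

/-- A symplectic matroid: a nonempty family of equinumerous admissible subsets of
`E_{±n}` with a unique maximal member under every admissible ordering. -/
def IsSymplecticMatroid {n : ℕ} (𝓑 : Set (Finset (EE n))) : Prop :=
  𝓑.Nonempty ∧ (∀ S ∈ 𝓑, Admissible S) ∧ (∀ S ∈ 𝓑, ∀ T ∈ 𝓑, S.card = T.card) ∧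
    HasUniqueMaximal 𝓑

/-- The circuits of a family of bases: minimal admissible subsets of `E_{±n}`
contained in no member of `𝓑`. -/
def Circuits {n : ℕ} (𝓑 : Set (Finset (EE n))) : Set (Finset (EE n)) :=
  {C | Admissible C ∧ (∀ B ∈ 𝓑, ¬ C ⊆ B) ∧
    ∀ D ⊂ C, Admissible D → ∃ B ∈ 𝓑, D ⊆ B}

/-- The bases determined by a circuit family: maximal admissible subsets of
`E_{±n}` containing no member of `𝓒`. -/
def BasesOf {n : ℕ} (𝓒 : Set (Finset (EE n))) : Set (Finset (EE n)) :=
  {B | Admissible B ∧ (∀ C ∈ 𝓒, ¬ C ⊆ B) ∧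
    ∀ D, B ⊂ D → Admissible D → ∃ C ∈ 𝓒, C ⊆ D}

/-- `P` spans `x` if some `J ∈ 𝓒` has `J − P = {x}`. -/
def Spans {n : ℕ} (𝓒 : Set (Finset (EE n))) (P : Finset (EE n)) (x : EE n) : Prop :=
  ∃ J ∈ 𝓒, J \ P = {x}

/-- Axiom (SC1). -/
def SC1 {n : ℕ} (𝓒 : Set (Finset (EE n))) : Prop := ∅ ∉ 𝓒

/-- Axiom (SC2). -/
def SC2 {n : ℕ} (𝓒 : Set (Finset (EE n))) : Prop :=
  ∀ C₁ ∈ 𝓒, ∀ C₂ ∈ 𝓒, C₁ ⊆ C₂ → C₁ = C₂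

/-- Axiom (SC3): circuit elimination when the union is admissible. -/
def SC3 {n : ℕ} (𝓒 : Set (Finset (EE n))) : Prop :=
  ∀ C₁ ∈ 𝓒, ∀ C₂ ∈ 𝓒, C₁ ≠ C₂ → Admissible (C₁ ∪ C₂) →
    ∀ x ∈ C₁ ∩ C₂, ∃ C ∈ 𝓒, C ⊆ (C₁ ∪ C₂) \ {x}

/-- Axiom (SC4): no small admissible set spans all of `E_{±n} − (P ∪ P*)`. -/
def SC4 {n : ℕ} (𝓒 : Set (Finset (EE n))) : Prop :=
  ∀ P : Finset (EE n), Admissible P → ∀ B ∈ BasesOf 𝓒, P.card < B.card →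
    ∃ x, x ∉ P ∪ starSet P ∧ ¬ Spans 𝓒 P x

/-!
Let `U = C₁ ∪ C₂`. If `U - {x}` lies in no basis it contains a circuit. Otherwise `U - {x} ⊆ B`
for a basis `B`; pick `y ∈ C₁ - C₂` and `z ∈ C₂ - C₁`. Then `U - {y, z}` lies in no basis `B'`:
for an admissible ordering putting `U - {y, z}` on top, then `y, z`, the maximal basis `M`
dominates every basis on each upper set of the ordering, so `M ⊇ U - {y, z}` (compare with `B'`),
hence `y, z ∉ M` (else `C₁ ⊆ M` or `C₂ ⊆ M`), and `M` meets `U` in fewer points than `B` does.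
So `U - {y, z}` contains a circuit `C₃ ≠ C₁`, and induction on `|U|` applied to `C₁, C₃`, whose
union misses `z`, finishes.
-/

open Finset

theorem List.Forall₂.le_trans {α : Type*} [Preorder α] {l₁ l₂ l₃ : List α}
    (h₁₂ : Forall₂ (· ≤ ·) l₁ l₂) (h₂₃ : Forall₂ (· ≤ ·) l₂ l₃) : Forall₂ (· ≤ ·) l₁ l₃ := by
  induction h₁₂ generalizing l₃ with
  | nil => cases h₂₃; exact .nil
  | cons hab _ ih =>
    cases h₂₃ with
    | cons hbc h => exact .cons (hab.trans hbc) (ih h)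

theorem List.Forall₂.eq_of_sum_le {α : Type*} [AddCommMonoid α] [PartialOrder α]
    [IsOrderedCancelAddMonoid α] {l₁ l₂ : List α} (h : Forall₂ (· ≤ ·) l₁ l₂)
    (hsum : l₂.sum ≤ l₁.sum) : l₁ = l₂ := by
  induction h with
  | nil => rfl
  | @cons a b l₁ l₂ hab h ih =>
    rw [List.sum_cons, List.sum_cons] at hsum
    have hl := h.sum_le_sum
    have hba : b ≤ a := le_of_add_le_add_right (hsum.trans (by gcongr))
    have hs : l₂.sum ≤ l₁.sum := le_of_add_le_add_left (hsum.trans (by gcongr))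
    rw [le_antisymm hab hba, ih hs]

theorem List.Forall₂.countP_le {α β : Type*} {R : α → β → Prop} {p : α → Bool} {q : β → Bool}
    (hpq : ∀ a b, R a b → p a → q b) {l₁ : List α} {l₂ : List β} (h : Forall₂ R l₁ l₂) :
    l₁.countP p ≤ l₂.countP q := by
  induction h with
  | nil => rfl
  | @cons a b _ _ hab _ ih =>
    have := hpq a b hab
    rw [List.countP_cons, List.countP_cons]
    split_ifs <;> grind

theorem Finset.card_filter_eq_countP_sort {α : Type*} [LinearOrder α] (s : Finset α)
    (p : α → Prop) [DecidablePred p] :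
    #{a ∈ s | p a} = (sort s (· ≤ ·)).countP (fun a => decide (p a)) := by
  rw [← Multiset.coe_countP, sort_eq, Multiset.countP_eq_card_filter, card_def, filter_val]

section

variable {n : ℕ}

theorem estar_estar (e : EE n) : estar (estar e) = e := by
  simp [estar]

theorem Admissible.mono {S T : Finset (EE n)} (hT : Admissible T) (hST : S ⊆ T) :
    Admissible S :=
  Disjoint.mono hST (image_subset_image hST) hT

theorem Admissible.estar_notMem {T : Finset (EE n)} (hT : Admissible T) {e : EE n}
    (he : e ∈ T) : estar e ∉ T :=
  fun h => disjoint_left.mp hT h (mem_image_of_mem estar he)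

theorem setLE_refl (o : AdmOrdering n) (A : Finset (EE n)) : setLE o A A :=
  List.forall₂_refl _

theorem setLE.trans {o : AdmOrdering n} {A B C : Finset (EE n)} (h₁ : setLE o A B)
    (h₂ : setLE o B C) : setLE o A C :=
  List.Forall₂.le_trans h₁ h₂

theorem setLE.eq_of_sum_le {o : AdmOrdering n} {A B : Finset (EE n)} (h : setLE o A B)
    (hsum : (sort (B.image o.w) (· ≤ ·)).sum ≤ (sort (A.image o.w) (· ≤ ·)).sum) : A = B := by
  have hsort := List.Forall₂.eq_of_sum_le h hsum
  apply image_injective o.inj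
  rw [← sort_toFinset (A.image o.w) (· ≤ ·), hsort, sort_toFinset]

theorem setLE.card_filter_le {o : AdmOrdering n} {S M : Finset (EE n)} (h : setLE o S M)
    (t : ℕ) : #{e ∈ S | t ≤ o.w e} ≤ #{e ∈ M | t ≤ o.w e} := by
  have hcount (A : Finset (EE n)) :
      #{e ∈ A | t ≤ o.w e} = (sort (A.image o.w) (· ≤ ·)).countP (fun a => t ≤ a) := by
    rw [← card_filter_eq_countP_sort, filter_image, card_image_of_injective _ o.inj]
  rw [hcount, hcount]
  exact List.Forall₂.countP_le (fun a b hab ha => by simp_all; omega) h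

/-- The maximal member is in fact the greatest: a `setLE`-maximal member above any `S ∈ 𝓑`
exists by finiteness (take one of largest rank sum) and is `M` by uniqueness. -/
theorem HasUniqueMaximal.exists_greatest {𝓑 : Set (Finset (EE n))} (h : HasUniqueMaximal 𝓑)
    (o : AdmOrdering n) : ∃ M ∈ 𝓑, ∀ S ∈ 𝓑, setLE o S M := by
  obtain ⟨M, ⟨hM, -⟩, huniq⟩ := h o
  refine ⟨M, hM, fun S hS => ?_⟩
  obtain ⟨T, ⟨hT, hST⟩, hTmax⟩ := Set.Finite.exists_maximalFor
    (fun T => (sort (T.image o.w) (· ≤ ·)).sum) {T | T ∈ 𝓑 ∧ setLE o S T}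
    (Set.toFinite _) ⟨S, hS, setLE_refl o S⟩
  have hTM : T = M := huniq T ⟨hT, fun U hU hTU =>
    hTU.eq_of_sum_le (hTmax ⟨hU, hST.trans hTU⟩ (List.Forall₂.sum_le_sum hTU))⟩
  exact hTM ▸ hST

theorem Int.toNat_add_sum_abs {ι : Type*} [Fintype ι] (φ : ι → ℤ) (i : ι) :
    ((φ i + ∑ j, |φ j|).toNat : ℤ) = φ i + ∑ j, |φ j| := by
  have := neg_le_of_abs_le (single_le_sum (fun j _ => abs_nonneg (φ j)) (mem_univ i))
  omega

def AdmOrdering.ofInt (φ : EE n → ℤ) (hinj : Function.Injective φ)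
    (hanti : ∀ e, φ (estar e) = -φ e) : AdmOrdering n where
  w e := (φ e + ∑ f, |φ f|).toNat
  inj e f hef := by
    dsimp only at hef
    have := Int.toNat_add_sum_abs φ e
    have := Int.toNat_add_sum_abs φ f
    exact hinj (by omega)
  rev e f hef := by
    have := Int.toNat_add_sum_abs φ
    grind

theorem AdmOrdering.ofInt_w_lt_of_lt {φ : EE n → ℤ} (hinj : Function.Injective φ)
    (hanti : ∀ e, φ (estar e) = -φ e) {e f : EE n} (hef : φ e < φ f) :
    (ofInt φ hinj hanti).w e < (ofInt φ hinj hanti).w f := by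
  have := Int.toNat_add_sum_abs φ e
  have := Int.toNat_add_sum_abs φ f
  simp only [ofInt]
  omega

def tiebreak (e : EE n) : ℤ := if e.2 then e.1 + 1 else -(e.1 + 1)

theorem tiebreak_injective : Function.Injective (tiebreak (n := n)) := by
  rintro ⟨i, _ | _⟩ ⟨j, _ | _⟩ hij <;> simp only [tiebreak] at hij <;>
    simp_all [Fin.ext_iff] <;> omega

theorem tiebreak_estar (e : EE n) : tiebreak (estar e) = -tiebreak e := by
  rcases e with ⟨i, _ | _⟩ <;> simp [tiebreak, estar]

theorem abs_tiebreak_le (e : EE n) : |tiebreak e| ≤ n := by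
  have := e.1.isLt
  rcases e with ⟨i, _ | _⟩ <;> simp only [tiebreak, abs_le] <;> grind

/-- Ties inside a level of `ℓ` are broken by `tiebreak`, which is smaller than the gap `2n + 1`
between levels. -/
theorem exists_admOrdering_lt_of_lt (ℓ : EE n → ℤ) (hanti : ∀ e, ℓ (estar e) = -ℓ e) :
    ∃ o : AdmOrdering n, ∀ e f, ℓ e < ℓ f → o.w e < o.w f := by
  set φ : EE n → ℤ := fun e => (2 * n + 1) * ℓ e + tiebreak e
  have hlt : ∀ e f, ℓ e < ℓ f → φ e < φ f := by
    intro e f hef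
    have hgap : (2 * n + 1) * ℓ e + (2 * n + 1) ≤ (2 * n + 1) * ℓ f := by
      nlinarith
    have := abs_le.mp (abs_tiebreak_le e)
    have := abs_le.mp (abs_tiebreak_le f)
    simp only [φ]
    linarith
  have hinj : Function.Injective φ := by
    intro e f hef
    have hℓ : ℓ e = ℓ f := by
      by_contra hne
      rcases lt_or_gt_of_ne hne with h | h
      · exact (hlt e f h).ne hef
      · exact (hlt f e h).ne hef.symm
    exact tiebreak_injective (by simpa [φ, hℓ] using hef)
  have hφanti : ∀ e, φ (estar e) = -φ e := fun e => by
    simp only [φ, hanti, tiebreak_estar]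
    ring
  exact ⟨AdmOrdering.ofInt φ hinj hφanti, fun e f hef =>
    AdmOrdering.ofInt_w_lt_of_lt hinj hφanti (hlt e f hef)⟩

/-- Each level set `{k ≤ ℓ}` is a threshold set `{t ≤ o.w}` of an admissible ordering `o`
refining `ℓ`. -/
theorem HasUniqueMaximal.exists_forall_card_filter_le {𝓑 : Set (Finset (EE n))}
    (h : HasUniqueMaximal 𝓑) (ℓ : EE n → ℤ) (hanti : ∀ e, ℓ (estar e) = -ℓ e) :
    ∃ M ∈ 𝓑, ∀ S ∈ 𝓑, ∀ k : ℤ, #{e ∈ S | k ≤ ℓ e} ≤ #{e ∈ M | k ≤ ℓ e} := by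
  obtain ⟨o, ho⟩ := exists_admOrdering_lt_of_lt ℓ hanti
  obtain ⟨M, hM, hMS⟩ := h.exists_greatest o
  refine ⟨M, hM, fun S hS k => ?_⟩
  by_cases hk : ∃ e, k ≤ ℓ e
  · obtain ⟨e₁, he₁⟩ := hk
    obtain ⟨e₀, he₀, hmin⟩ :=
      exists_min_image {e | k ≤ ℓ e} o.w ⟨e₁, by simpa using he₁⟩
    have hthreshold : ∀ e, k ≤ ℓ e ↔ o.w e₀ ≤ o.w e := fun e =>
      ⟨fun he => hmin e (by simpa using he), fun he => by
        by_contra hlt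
        exact (ho e e₀ (by simp at he₀; omega)).not_ge he⟩
    simp only [hthreshold]
    exact (hMS S hS).card_filter_le _
  · have hk' : ∀ e, ¬ k ≤ ℓ e := fun e he => hk ⟨e, he⟩
    simp [hk']

theorem HasUniqueMaximal.exists_forall_card_inter_le {𝓑 : Set (Finset (EE n))}
    (h : HasUniqueMaximal 𝓑) {A T : Finset (EE n)} (hT : Admissible T) (hAT : A ⊆ T) :
    ∃ M ∈ 𝓑, ∀ S ∈ 𝓑, #(S ∩ A) ≤ #(M ∩ A) ∧ #(S ∩ T) ≤ #(M ∩ T) := by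
  classical
  let ind : Prop → ℤ := fun p => if p then 1 else 0
  let ℓ : EE n → ℤ := fun e =>
    ind (e ∈ A) + ind (e ∈ T) - ind (estar e ∈ A) - ind (estar e ∈ T)
  have hanti : ∀ e, ℓ (estar e) = -ℓ e := fun e => by
    simp only [ℓ, estar_estar]
    ring
  have hlevel : ∀ e, (2 ≤ ℓ e ↔ e ∈ A) ∧ (1 ≤ ℓ e ↔ e ∈ T) := fun e => by
    have hA : estar e ∈ A → estar e ∈ T := fun h => hAT h
    have hT' : e ∈ T → estar e ∉ T := hT.estar_notMem
    have hA' : e ∈ A → e ∈ T := fun h => hAT h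
    by_cases h1 : e ∈ A <;> by_cases h2 : e ∈ T <;> by_cases h3 : estar e ∈ A <;>
      by_cases h4 : estar e ∈ T <;> simp_all [ℓ, ind]
  obtain ⟨M, hM, hMS⟩ := h.exists_forall_card_filter_le ℓ hanti
  refine ⟨M, hM, fun S hS => ?_⟩
  have h2 := hMS S hS 2
  have h1 := hMS S hS 1
  simp only [fun e => (hlevel e).1, fun e => (hlevel e).2, filter_mem_eq_inter] at h1 h2
  exact ⟨h2, h1⟩

theorem exists_circuit_subset {𝓑 : Set (Finset (EE n))} {A : Finset (EE n)}
    (hA : Admissible A) (hdep : ∀ B ∈ 𝓑, ¬ A ⊆ B) : ∃ C ∈ Circuits 𝓑, C ⊆ A := by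
  induction A using Finset.strongInduction with
  | _ A ih =>
    by_cases hmin : ∀ D ⊂ A, Admissible D → ∃ B ∈ 𝓑, D ⊆ B
    · exact ⟨A, ⟨hA, hdep, hmin⟩, Subset.refl A⟩
    · push Not at hmin
      obtain ⟨D, hDA, hDadm, hDdep⟩ := hmin
      obtain ⟨C, hC, hCD⟩ := ih D hDA hDadm hDdep
      exact ⟨C, hC, hCD.trans hDA.subset⟩

theorem Circuits.exists_mem_notMem {𝓑 : Set (Finset (EE n))} {C₁ C₂ : Finset (EE n)}
    (hC₁ : C₁ ∈ Circuits 𝓑) (hC₂ : C₂ ∈ Circuits 𝓑) (hne : C₁ ≠ C₂) : ∃ y ∈ C₁, y ∉ C₂ := by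
  by_contra! hsub
  obtain ⟨B, hB, hC₁B⟩ := hC₂.2.2 C₁ (ssubset_of_subset_of_ne hsub hne) hC₁.1
  exact hC₁.2.1 B hB hC₁B

theorem HasUniqueMaximal.forall_not_union_sdiff_pair_subset {𝓑 : Set (Finset (EE n))}
    (h : HasUniqueMaximal 𝓑) {C₁ C₂ : Finset (EE n)} (hC₁ : C₁ ∈ Circuits 𝓑)
    (hC₂ : C₂ ∈ Circuits 𝓑) (hadm : Admissible (C₁ ∪ C₂)) {B : Finset (EE n)} (hB : B ∈ 𝓑)
    {x : EE n} (hxB : (C₁ ∪ C₂) \ {x} ⊆ B) {y z : EE n} (hy₁ : y ∈ C₁) (hy₂ : y ∉ C₂)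
    (hz₂ : z ∈ C₂) (hz₁ : z ∉ C₁) : ∀ B' ∈ 𝓑, ¬ (C₁ ∪ C₂) \ {y, z} ⊆ B' := by
  intro B' hB' hRB'
  set U := C₁ ∪ C₂
  set R := U \ {y, z}
  obtain ⟨M, hM, hMS⟩ := h.exists_forall_card_inter_le hadm (sdiff_subset : R ⊆ U)
  have hRM : R ⊆ M := by
    have hcard := (hMS B' hB').1
    rw [inter_eq_right.mpr hRB'] at hcard
    exact inter_eq_right.mp (eq_of_subset_of_card_le inter_subset_right hcard)
  have hyM : y ∉ M := fun hyM =>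
    hC₁.2.1 M hM fun e he => by
      by_cases hey : e = y
      · exact hey ▸ hyM
      · exact hRM (by grind)
  have hzM : z ∉ M := fun hzM =>
    hC₂.2.1 M hM fun e he => by
      by_cases hez : e = z
      · exact hez ▸ hzM
      · exact hRM (by grind)
  have hMU : #(M ∩ U) ≤ #R := card_le_card fun e he => by grind
  have hBU : #(U \ {x}) ≤ #(B ∩ U) := card_le_card fun e he => by grind
  have hUx : #U ≤ #(U \ {x}) + 1 := card_le_card_sdiff_add_card
  have hUyz : #R + 2 = #U := by
    rw [← card_pair (fun hyz : y = z => hz₁ (hyz ▸ hy₁))]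
    exact card_sdiff_add_card_eq_card (by grind)
  have := (hMS B hB).2
  omega

theorem HasUniqueMaximal.exists_circuit_subset_union_sdiff {𝓑 : Set (Finset (EE n))}
    (h : HasUniqueMaximal 𝓑) {C₁ C₂ : Finset (EE n)} (hC₁ : C₁ ∈ Circuits 𝓑)
    (hC₂ : C₂ ∈ Circuits 𝓑) (hne : C₁ ≠ C₂) (hadm : Admissible (C₁ ∪ C₂)) (x : EE n) :
    ∃ C ∈ Circuits 𝓑, C ⊆ (C₁ ∪ C₂) \ {x} := by
  induction hN : #(C₁ ∪ C₂) using Nat.strong_induction_on generalizing C₂ with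
  | _ N ih =>
  by_cases hdep : ∀ B ∈ 𝓑, ¬ (C₁ ∪ C₂) \ {x} ⊆ B
  · exact exists_circuit_subset (hadm.mono sdiff_subset) hdep
  push Not at hdep
  obtain ⟨B, hB, hxB⟩ := hdep
  obtain ⟨y, hy₁, hy₂⟩ := Circuits.exists_mem_notMem hC₁ hC₂ hne
  obtain ⟨z, hz₂, hz₁⟩ := Circuits.exists_mem_notMem hC₂ hC₁ hne.symm
  obtain ⟨C₃, hC₃, hC₃R⟩ := exists_circuit_subset (hadm.mono sdiff_subset)
    (h.forall_not_union_sdiff_pair_subset hC₁ hC₂ hadm hB hxB hy₁ hy₂ hz₂ hz₁)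
  have hsub : C₁ ∪ C₃ ⊆ (C₁ ∪ C₂) \ {z} := fun e he => by grind
  have hlt : #(C₁ ∪ C₃) < N := hN ▸ (card_le_card hsub).trans_lt
    (card_lt_card (sdiff_ssubset (singleton_subset_iff.2 (mem_union_right _ hz₂))
      (singleton_nonempty z)))
  obtain ⟨C, hC, hCsub⟩ := ih _ hlt hC₃ (fun h13 => hy₂ (by grind))
    (hadm.mono (hsub.trans sdiff_subset)) rfl
  exact ⟨C, hC, hCsub.trans fun e he => by grind⟩

end

theorem circuits_SC3_general {n : ℕ} (𝓑 : Set (Finset (EE n)))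
    (h : IsSymplecticMatroid 𝓑) (C₁ : Finset (EE n)) (hC₁ : C₁ ∈ Circuits 𝓑)
    (C₂ : Finset (EE n)) (hC₂ : C₂ ∈ Circuits 𝓑) (hne : C₁ ≠ C₂)
    (hadm : Admissible (C₁ ∪ C₂)) (x : EE n) :
    ∃ C ∈ Circuits 𝓑, C ⊆ (C₁ ∪ C₂) \ {x} :=
  h.2.2.2.exists_circuit_subset_union_sdiff hC₁ hC₂ hne hadm x

/-- circuit elimination: distinct circuits with admissible union
admit elimination of a common element. -/
theorem circuits_SC3 {n : ℕ} (𝓑 : Set (Finset (EE n)))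
    (h : IsSymplecticMatroid 𝓑) (C₁ : Finset (EE n)) (hC₁ : C₁ ∈ Circuits 𝓑)
    (C₂ : Finset (EE n)) (hC₂ : C₂ ∈ Circuits 𝓑) (hne : C₁ ≠ C₂)
    (hadm : Admissible (C₁ ∪ C₂)) (x : EE n) (hx : x ∈ C₁ ∩ C₂) :
    ∃ C ∈ Circuits 𝓑, C ⊆ (C₁ ∪ C₂) \ {x} :=
  circuits_SC3_general 𝓑 h C₁ hC₁ C₂ hC₂ hne hadm x
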